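/- For every 312-avoiding permutation π of length n, the number of occurrences of the vincular pattern [23]-1 equals (Σ_{i ∈ Lmax(π)} (π_i - i)) - n + lmax(π), where Lmax(π) is the set of left-to-right maximum positions and lmax(π) = |Lmax(π)|. -/

import Mathlib

/-!
At a left-to-right maximum `i`, the value `π i - i` is the number of later positions with smaller
value, so the sum counts pairs `(i, y)` with `i` a left-to-right maximum, `i < y` and
`π y < π i`. Split them by whether some position before `i` already exceeds `π y`. If none does,
`i` is the first position exceeding `π y`; it exists and lies before `y` exactly when `y` is not a
left-to-right maximum, giving `n - lmax π` pairs. Otherwise avoiding 312 forces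
`π (i - 1) > π y`, so `(i - 1, i, y)` is an occurrence of `[23]-1`; conversely, in a 312-avoider
the top `x + 1` of an occurrence `(x, x + 1, y)` is a left-to-right maximum.
-/

open scoped Classical

namespace ThesisStmt
noncomputable section

variable {n : ℕ}

/-- π avoids the classical pattern 231: no i<j<k with π k < π i < π j. -/
def Avoids231 (π : Equiv.Perm (Fin n)) : Prop :=
  ¬ ∃ i j k : Fin n, i < j ∧ j < k ∧ π k < π i ∧ π i < π j

/-- π avoids 312: no i<j<k with π j < π k < π i. -/
def Avoids312 (π : Equiv.Perm (Fin n)) : Prop :=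
  ¬ ∃ i j k : Fin n, i < j ∧ j < k ∧ π j < π k ∧ π k < π i

/-- π avoids 321: no i<j<k with π k < π j < π i. -/
def Avoids321 (π : Equiv.Perm (Fin n)) : Prop :=
  ¬ ∃ i j k : Fin n, i < j ∧ j < k ∧ π k < π j ∧ π j < π i

/-- A nonempty set of positions whose values, read in increasing position order,
form consecutive integers decreasing by 1 (values strictly decrease along positions
and the value set is an integer interval). -/
def IsDecSeq (π : Equiv.Perm (Fin n)) (I : Finset (Fin n)) : Prop :=
  I.Nonempty ∧ (∀ i ∈ I, ∀ j ∈ I, i < j → π j < π i) ∧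
    ∀ v : Fin n, (∃ a ∈ I, π a ≤ v) → (∃ b ∈ I, v ≤ π b) → ∃ c ∈ I, π c = v

/-- An inverse descent run: a maximal `IsDecSeq`. -/
def IsIDR (π : Equiv.Perm (Fin n)) (I : Finset (Fin n)) : Prop :=
  IsDecSeq π I ∧ ∀ J : Finset (Fin n), IsDecSeq π J → I ⊆ J → J = I

/-- `I 0, I 1, ..., I (k-1)` is the family of inverse descent runs of π,
partitioning the positions, ordered by decreasing maximum value. -/
def IDRFamily (π : Equiv.Perm (Fin n)) {k : ℕ} (I : Fin k → Finset (Fin n)) : Prop :=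
  (∀ j, IsIDR π (I j)) ∧ (∀ x : Fin n, ∃! j, x ∈ I j) ∧
    ∀ u v : Fin k, u < v → ∃ a ∈ I u, ∀ b ∈ I v, π b < π a

/-- position i is a left-to-right maximum. -/
def IsLmax (π : Equiv.Perm (Fin n)) (i : Fin n) : Prop := ∀ j, j < i → π j < π i

/-- position i is a right-to-left maximum. -/
def IsRmax (π : Equiv.Perm (Fin n)) (i : Fin n) : Prop := ∀ j, i < j → π j < π i

/-- position i is a right-to-left minimum. -/
def IsRmin (π : Equiv.Perm (Fin n)) (i : Fin n) : Prop := ∀ j, i < j → π i < π j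

def LmaxSet (π : Equiv.Perm (Fin n)) : Finset (Fin n) := Finset.univ.filter (IsLmax π)

def rmaxCount (π : Equiv.Perm (Fin n)) : ℕ := (Finset.univ.filter (IsRmax π)).card

def rminCount (π : Equiv.Perm (Fin n)) : ℕ := (Finset.univ.filter (IsRmin π)).card

/-- number of inversions (i, j) with first coordinate i. -/
def invAt (π : Equiv.Perm (Fin n)) (i : Fin n) : ℕ :=
  (Finset.univ.filter (fun j : Fin n => i < j ∧ π j < π i)).card

/-- total number of inversions. -/
def inv (π : Equiv.Perm (Fin n)) : ℕ :=
  (Finset.univ.filter (fun p : Fin n × Fin n => p.1 < p.2 ∧ π p.2 < π p.1)).card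

def IsAscent (π : Equiv.Perm (Fin n)) (i : Fin n) : Prop :=
  ∃ h : (i : ℕ) + 1 < n, π i < π ⟨(i : ℕ) + 1, h⟩

def IsDescent (π : Equiv.Perm (Fin n)) (i : Fin n) : Prop :=
  ∃ h : (i : ℕ) + 1 < n, π ⟨(i : ℕ) + 1, h⟩ < π i

/-- number of descents, which is also the number of occurrences of [21]. -/
def des (π : Equiv.Perm (Fin n)) : ℕ := (Finset.univ.filter (IsDescent π)).card

/-- occurrences of the vincular pattern 2-[13]: (x, y, y+1), x < y, π y < π x < π (y+1). -/
def occ2_13 (π : Equiv.Perm (Fin n)) : ℕ :=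
  (Finset.univ.filter (fun p : Fin n × Fin n =>
    ∃ h : (p.2 : ℕ) + 1 < n, p.1 < p.2 ∧
      π p.2 < π p.1 ∧ π p.1 < π ⟨(p.2 : ℕ) + 1, h⟩)).card

/-- occurrences of [23]-1: (x, x+1, y), x+1 < y, π y < π x < π (x+1). -/
def occ23_1 (π : Equiv.Perm (Fin n)) : ℕ :=
  (Finset.univ.filter (fun p : Fin n × Fin n =>
    ∃ h : (p.1 : ℕ) + 1 < n, (⟨(p.1 : ℕ) + 1, h⟩ : Fin n) < p.2 ∧
      π p.2 < π p.1 ∧ π p.1 < π ⟨(p.1 : ℕ) + 1, h⟩)).card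

/-- occurrences of [13]-2: (x, x+1, y), x+1 < y, π x < π y < π (x+1). -/
def occ13_2 (π : Equiv.Perm (Fin n)) : ℕ :=
  (Finset.univ.filter (fun p : Fin n × Fin n =>
    ∃ h : (p.1 : ℕ) + 1 < n, (⟨(p.1 : ℕ) + 1, h⟩ : Fin n) < p.2 ∧
      π p.1 < π p.2 ∧ π p.2 < π ⟨(p.1 : ℕ) + 1, h⟩)).card

/-- occurrences of [21]-3: (x, x+1, y), x+1 < y, π (x+1) < π x < π y. -/
def occ21_3 (π : Equiv.Perm (Fin n)) : ℕ :=
  (Finset.univ.filter (fun p : Fin n × Fin n =>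
    ∃ h : (p.1 : ℕ) + 1 < n, (⟨(p.1 : ℕ) + 1, h⟩ : Fin n) < p.2 ∧
      π ⟨(p.1 : ℕ) + 1, h⟩ < π p.1 ∧ π p.1 < π p.2)).card

/-- occurrences of [32]-1: (x, x+1, y), x+1 < y, π y < π (x+1) < π x. -/
def occ32_1 (π : Equiv.Perm (Fin n)) : ℕ :=
  (Finset.univ.filter (fun p : Fin n × Fin n =>
    ∃ h : (p.1 : ℕ) + 1 < n, (⟨(p.1 : ℕ) + 1, h⟩ : Fin n) < p.2 ∧
      π p.2 < π ⟨(p.1 : ℕ) + 1, h⟩ ∧ π ⟨(p.1 : ℕ) + 1, h⟩ < π p.1)).card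

/-- occurrences of [31]-2: (x, x+1, y), x+1 < y, π (x+1) < π y < π x. -/
def occ31_2 (π : Equiv.Perm (Fin n)) : ℕ :=
  (Finset.univ.filter (fun p : Fin n × Fin n =>
    ∃ h : (p.1 : ℕ) + 1 < n, (⟨(p.1 : ℕ) + 1, h⟩ : Fin n) < p.2 ∧
      π ⟨(p.1 : ℕ) + 1, h⟩ < π p.2 ∧ π p.2 < π p.1)).card

/-- occurrences of 3-[21]: (y, x, x+1), y < x, π (x+1) < π x < π y. -/
def occ3_21 (π : Equiv.Perm (Fin n)) : ℕ :=
  (Finset.univ.filter (fun p : Fin n × Fin n =>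
    ∃ h : (p.2 : ℕ) + 1 < n, p.1 < p.2 ∧
      π ⟨(p.2 : ℕ) + 1, h⟩ < π p.2 ∧ π p.2 < π p.1)).card

/-- bast = [13]2 + [21]3 + [32]1 + [21]. -/
def bast (π : Equiv.Perm (Fin n)) : ℕ := occ13_2 π + occ21_3 π + occ32_1 π + des π

/-- foze = [21]3 + 3[21] + [13]2 + [21]. -/
def foze (π : Equiv.Perm (Fin n)) : ℕ := occ21_3 π + occ3_21 π + occ13_2 π + des π

/-- foze'' = [23]1 + [31]2 + [31]2 + [21]. -/
def fozePP (π : Equiv.Perm (Fin n)) : ℕ := occ23_1 π + occ31_2 π + occ31_2 π + des π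

open Finset

section
variable (π : Equiv.Perm (Fin n))

lemma card_filter_apply_lt (i : Fin n) : #{j | π j < π i} = (π i : ℕ) := by
  rw [← Fin.card_Iio]
  exact card_equiv π (by simp)

def lmaxInversions : Finset (Fin n × Fin n) :=
  {p | IsLmax π p.1 ∧ p.1 < p.2 ∧ π p.2 < π p.1}

@[simp]
lemma mem_lmaxInversions {p : Fin n × Fin n} :
    p ∈ lmaxInversions π ↔ IsLmax π p.1 ∧ p.1 < p.2 ∧ π p.2 < π p.1 := by
  simp [lmaxInversions]

lemma card_lmaxInversions : #(lmaxInversions π) = ∑ i ∈ LmaxSet π, invAt π i := by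
  simp only [lmaxInversions, LmaxSet, invAt, card_filter, Fintype.sum_prod_type, sum_filter]
  refine sum_congr rfl fun i _ => ?_
  split_ifs with hi <;> simp [hi]

end

section
variable {π : Equiv.Perm (Fin n)}

lemma IsLmax.val_eq_add_invAt {i : Fin n} (hi : IsLmax π i) : (π i : ℕ) = i + invAt π i := by
  have hsplit : ({j | π j < π i} : Finset (Fin n)) =
      Iio i ∪ ({j | i < j ∧ π j < π i} : Finset (Fin n)) := by
    ext j
    simp only [mem_filter, mem_univ, true_and, mem_union, mem_Iio]
    refine ⟨fun hj => ?_, ?_⟩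
    · rcases lt_trichotomy j i with hji | rfl | hji
      · exact .inl hji
      · exact absurd hj (lt_irrefl _)
      · exact .inr ⟨hji, hj⟩
    · rintro (hji | ⟨-, hj⟩)
      exacts [hi j hji, hj]
  have hdisj : Disjoint (Iio i) ({j | i < j ∧ π j < π i} : Finset (Fin n)) := by
    simp only [disjoint_left, mem_Iio, mem_filter, mem_univ, true_and]
    exact fun j hji hij => (hji.trans hij.1).false
  rw [← card_filter_apply_lt, hsplit, card_union_of_disjoint hdisj, Fin.card_Iio, invAt]

lemma card_filter_lmaxInversions_forall_lt :
    #{p ∈ lmaxInversions π | ∀ j < p.1, π j < π p.2} = #{y | ¬ IsLmax π y} := by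
  refine card_nbij Prod.snd ?_ ?_ ?_
  · rintro ⟨i, y⟩ hp
    simp only [coe_filter, mem_lmaxInversions, mem_univ, true_and, Set.mem_ofPred_eq] at hp ⊢
    exact fun hy => (hy i hp.1.2.1).asymm hp.1.2.2
  · rintro ⟨i, y⟩ hp ⟨i', y'⟩ hp' (rfl : y = y')
    simp only [coe_filter, mem_lmaxInversions, Set.mem_ofPred_eq] at hp hp'
    rcases lt_trichotomy i i' with hii' | rfl | hi'i
    · exact absurd (hp'.2 i hii') hp.1.2.2.asymm
    · rfl
    · exact absurd (hp.2 i' hi'i) hp'.1.2.2.asymm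
  · intro y hy
    simp only [coe_filter, mem_univ, true_and, Set.mem_ofPred_eq, IsLmax, not_forall] at hy
    obtain ⟨j, hjy, hyj⟩ := hy
    have hyj : π y < π j := (not_lt.1 hyj).lt_of_ne (π.injective.ne hjy.ne')
    set s : Finset (Fin n) := {k | π y < π k}
    have hs : s.Nonempty := ⟨j, by simpa [s] using hyj⟩
    have hyi : π y < π (s.min' hs) := by simpa [s] using s.min'_mem hs
    have hiy : s.min' hs < y := (s.min'_le j (by simpa [s] using hyj)).trans_lt hjy
    have hbefore : ∀ k < s.min' hs, π k < π y := fun k hk =>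
      (not_lt.1 fun h => (s.min'_le k (by simpa [s] using h)).not_gt hk).lt_of_ne
        (π.injective.ne (hk.trans hiy).ne)
    refine ⟨(s.min' hs, y), ?_, rfl⟩
    simp only [coe_filter, mem_lmaxInversions, Set.mem_ofPred_eq]
    exact ⟨⟨fun k hk => (hbefore k hk).trans hyi, hiy, hyi⟩, hbefore⟩

lemma Avoids312.apply_lt_apply_of_lt_of_lt (h : Avoids312 π) {j x y : Fin n} (hjx : j < x)
    (hxy : x < y) (hyj : π y < π j) : π y < π x :=
  (not_lt.1 fun hxy' => h ⟨j, x, y, hjx, hxy, hxy', hyj⟩).lt_of_ne (π.injective.ne hxy.ne')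

lemma Avoids312.isLmax_of_apply_lt_apply_succ (h : Avoids312 π) {x : Fin n}
    (hx : (x : ℕ) + 1 < n) (hasc : π x < π ⟨x + 1, hx⟩) : IsLmax π ⟨x + 1, hx⟩ := by
  intro j hj
  rcases (Fin.le_iff_val_le_val.2 (Nat.lt_succ_iff.1 hj)).lt_or_eq with hjx | rfl
  · by_contra! hj'
    exact (h.apply_lt_apply_of_lt_of_lt hjx (Fin.lt_def.2 (Nat.lt_succ_self x))
      (hj'.lt_of_ne (π.injective.ne hj.ne'))).asymm hasc
  · exact hasc

lemma Avoids312.occ23_1_eq (h : Avoids312 π) :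
    occ23_1 π = #{p ∈ lmaxInversions π | ¬ ∀ j < p.1, π j < π p.2} := by
  symm
  refine card_nbij (fun p => (⟨p.1 - 1, p.1.val.sub_le 1 |>.trans_lt p.1.isLt⟩, p.2)) ?_ ?_ ?_
  · rintro ⟨i, y⟩ hp
    simp only [coe_filter, mem_lmaxInversions, mem_univ, true_and, Set.mem_ofPred_eq,
      not_forall, not_lt] at hp ⊢
    obtain ⟨⟨hi, hiy, hyi⟩, j, hji, hyj⟩ := hp
    have hyj : π y < π j := hyj.lt_of_ne (π.injective.ne (hji.trans hiy).ne')
    have hpred_succ : (⟨(i : ℕ) - 1 + 1, by omega⟩ : Fin n) = i := Fin.ext (by simp; omega)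
    refine ⟨by omega, ?_⟩
    rw [hpred_succ]
    refine ⟨hiy, ?_, hi _ (Fin.lt_def.2 (by simp; omega))⟩
    rcases (Fin.le_def.2 (by simp; omega) : j ≤ ⟨(i : ℕ) - 1, by omega⟩).lt_or_eq
      with hjx | hjx
    · exact h.apply_lt_apply_of_lt_of_lt hjx (Fin.lt_def.2 (by simp; omega)) hyj
    · rwa [← hjx]
  · rintro ⟨i, y⟩ hp ⟨i', y'⟩ hp' hii'
    simp only [coe_filter, mem_lmaxInversions, Set.mem_ofPred_eq,
      not_forall, Prod.mk.injEq, Fin.mk.injEq] at hp hp' hii'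
    obtain ⟨-, j, hji, -⟩ := hp
    obtain ⟨-, j', hj'i', -⟩ := hp'
    exact Prod.ext (Fin.ext (show (i : ℕ) = i' by omega)) hii'.2
  · rintro ⟨x, y⟩ hp
    simp only [coe_filter, mem_univ, true_and, Set.mem_ofPred_eq] at hp
    obtain ⟨hx, hxy, hyx, hasc⟩ := hp
    refine ⟨(⟨x + 1, hx⟩, y), ?_, by simp⟩
    simp only [coe_filter, mem_lmaxInversions, Set.mem_ofPred_eq, not_forall, not_lt]
    exact ⟨⟨h.isLmax_of_apply_lt_apply_succ hx hasc, hxy, hyx.trans hasc⟩, x,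
      Fin.lt_def.2 (Nat.lt_succ_self x), hyx.le⟩

end

/-- for 312-avoiding π of length n, the number of [23]-1 occurrences
equals (Σ_{i ∈ Lmax(π)} (π_i - i)) - n + lmax(π). -/
theorem stmt8 {n : ℕ} (π : Equiv.Perm (Fin n)) (h : Avoids312 π) :
    (occ23_1 π : ℤ) =
      (∑ i ∈ LmaxSet π, ((π i : ℤ) - (i : ℤ))) - (n : ℤ) + (LmaxSet π).card := by
  have hsum :
      ∑ i ∈ LmaxSet π, ((π i : ℤ) - (i : ℤ)) = ∑ i ∈ LmaxSet π, (invAt π i : ℤ) :=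
    sum_congr rfl fun i hi => by
      rw [(mem_filter.1 hi).2.val_eq_add_invAt]
      push_cast
      ring
  have hsplit := card_filter_add_card_filter_not (s := lmaxInversions π)
    (fun p => ∀ j < p.1, π j < π p.2)
  rw [card_filter_lmaxInversions_forall_lt, ← h.occ23_1_eq, card_lmaxInversions] at hsplit
  have hcard : #(LmaxSet π) + #{y | ¬ IsLmax π y} = n := by
    simpa [LmaxSet] using card_filter_add_card_filter_not (s := univ) (IsLmax π)
  rw [hsum, ← Nat.cast_sum]
  omega

end
end ThesisStmt
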